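/- arXiv:1106.5531 — 2 statements merged into one kernel-verified Lean document; each statement's English description precedes it below -/
import Mathlib

section
/- Let r, n, m be natural numbers with n ≥ 1, and let p_m(x) = ∑_{i=0}^{m} x^i/i! as a polynomial over ℚ. Then the number of functions f : Fin r → Fin n such that every fiber has cardinality at most m equals r! times the coefficient of x^r in the polynomial (p_m(x))^n. -/
/-!
Sort the maps `f : α → Option β` by the set `s` of balls landing in the extra box `none`: the maps
all of whose fibres have at most `m` elements correspond to a set `s` with `#s ≤ m` together with
such a map `sᶜ → β`. So, writing `N(r, n)` for the count with `r` balls and `n` boxes,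
`N(r, n + 1) = ∑_{b ≤ m} (r choose b) N(r - b, n)`. This is the binomial convolution by which
`r! [x^r] (p q)` is computed from `b! [x^b] p` and `(r - b)! [x^(r-b)] q`, and `b! [x^b] p_m` is `1`
for `b ≤ m` and `0` otherwise; induction on `n` gives `N(r, n) = r! [x^r] p_m^n`.
-/

open Polynomial Finset

open scoped Nat

lemma factorial_mul_coeff_mul {R : Type*} [CommSemiring R] (p q : R[X]) (r : ℕ) :
    (r ! : R) * (p * q).coeff r =
      ∑ b ∈ range (r + 1), (r.choose b : R) * ((b ! : R) * p.coeff b) *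
        (((r - b)! : R) * q.coeff (r - b)) := by
  rw [coeff_mul, Nat.sum_antidiagonal_eq_sum_range_succ_mk, mul_sum]
  refine sum_congr rfl fun b hb => ?_
  have hfac := Nat.choose_mul_factorial_mul_factorial (Nat.lt_succ_iff.1 (mem_range.1 hb))
  rw [← hfac]
  push_cast
  ring

noncomputable def truncExp (m : ℕ) : ℚ[X] := ∑ i ∈ range (m + 1), C ((i ! : ℚ)⁻¹) * X ^ i

lemma factorial_mul_coeff_truncExp (m b : ℕ) :
    (b ! : ℚ) * (truncExp m).coeff b = if b ≤ m then 1 else 0 := by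
  simp only [truncExp, finsetSum_coeff, coeff_C_mul, coeff_X_pow, mul_ite, mul_one, mul_zero,
    sum_ite_eq, mem_range, Nat.lt_succ_iff]
  split_ifs <;> simp [Nat.factorial_ne_zero]

section ExtendNone

variable {α β : Type*} [DecidableEq α] {s : Finset α}

def extendNone (s : Finset α) (g : {a // a ∉ s} → β) (a : α) : Option β :=
  if h : a ∈ s then none else some (g ⟨a, h⟩)

lemma extendNone_eq_none_iff {g : {a // a ∉ s} → β} {a : α} :
    extendNone s g a = none ↔ a ∈ s := by
  unfold extendNone; split_ifs with h <;> simp [h]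

lemma extendNone_injective : Function.Injective (extendNone (β := β) s) := by
  intro g₁ g₂ h
  funext a
  simpa [extendNone, a.2] using congrFun h a

lemma card_filter_extendNone_eq_some [Fintype α] [DecidableEq β] (g : {a // a ∉ s} → β)
    (j : β) :
    #(univ.filter fun a => extendNone s g a = some j) = #(univ.filter fun a => g a = j) := by
  rw [← card_map (Function.Embedding.subtype _)]
  congr 1
  ext a
  by_cases h : a ∈ s <;> simp [extendNone, h]

end ExtendNone

def boundedFiberMaps (α β : Type*) [Fintype α] [DecidableEq α] [Fintype β] [DecidableEq β]
    (m : ℕ) : Finset (α → β) :=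
  univ.filter fun f => ∀ j, #(univ.filter fun k => f k = j) ≤ m

section BoundedFiberMaps

variable {α β γ : Type*} [Fintype α] [DecidableEq α] [Fintype β] [DecidableEq β]

lemma card_boundedFiberMaps_congr_right [Fintype γ] [DecidableEq γ] (e : β ≃ γ) (m : ℕ) :
    #(boundedFiberMaps α β m) = #(boundedFiberMaps α γ m) := by
  refine card_equiv ((Equiv.refl α).arrowCongr e) fun f => ?_
  simp only [boundedFiberMaps, mem_filter, mem_univ, true_and]
  exact e.forall_congr <| by simp [e.apply_eq_iff_eq]

lemma card_filter_boundedFiberMaps_option {m : ℕ} {s : Finset α} (hs : #s ≤ m) :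
    #((boundedFiberMaps α (Option β) m).filter fun f => univ.filter (f · = none) = s) =
      #(boundedFiberMaps {a // a ∉ s} β m) := by
  symm
  refine card_bij (fun g _ => extendNone s g) (fun g hg => ?_)
    (fun _ _ _ _ h => extendNone_injective h) (fun f hf => ?_)
  · have hnone : univ.filter (extendNone s g · = none) = s := by
      ext a; simp [extendNone_eq_none_iff]
    simp only [boundedFiberMaps, mem_filter, mem_univ, true_and] at hg ⊢
    refine ⟨fun j => ?_, hnone⟩
    cases j with
    | none => rwa [hnone]
    | some j => rw [card_filter_extendNone_eq_some]; exact hg j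
  · simp only [boundedFiberMaps, mem_filter, mem_univ, true_and] at hf ⊢
    obtain ⟨hbound, hnone⟩ := hf
    have hnone_iff (a : α) : f a = none ↔ a ∈ s := by simp [← hnone]
    have hsome (a : {a // a ∉ s}) : (f a).isSome :=
      Option.isSome_iff_ne_none.2 fun h => a.2 ((hnone_iff a).1 h)
    have hf : extendNone s (fun a => (f a).get (hsome a)) = f := by
      funext a
      by_cases ha : a ∈ s
      · simp [extendNone, ha, (hnone_iff a).2 ha]
      · simp [extendNone, ha]
    refine ⟨_, fun j => ?_, hf⟩
    rw [← card_filter_extendNone_eq_some, hf]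
    exact hbound (some j)

lemma card_boundedFiberMaps_option (m : ℕ) :
    #(boundedFiberMaps α (Option β) m) =
      ∑ s ∈ (univ : Finset (Finset α)).filter (#· ≤ m), #(boundedFiberMaps {a // a ∉ s} β m) := by
  rw [card_eq_sum_card_fiberwise (f := fun f => univ.filter (f · = none))
    (t := (univ : Finset (Finset α)).filter (#· ≤ m))]
  · exact sum_congr rfl fun s hs => card_filter_boundedFiberMaps_option (mem_filter.1 hs).2
  · exact fun f hf => mem_filter.2 ⟨mem_univ _, (mem_filter.1 hf).2 none⟩

end BoundedFiberMaps

theorem card_boundedFiberMaps_fin (m n : ℕ) (α : Type*) [Fintype α] [DecidableEq α] :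
    (#(boundedFiberMaps α (Fin n) m) : ℚ) =
      (Fintype.card α)! * (truncExp m ^ n).coeff (Fintype.card α) := by
  induction n generalizing α with
  | zero =>
    simp only [boundedFiberMaps, IsEmpty.forall_iff, filter_true, card_univ, Fintype.card_pi,
      Fintype.card_fin, prod_const, pow_zero, coeff_one]
    split_ifs with h <;> simp [h]
  | succ n ih =>
    rw [card_boundedFiberMaps_congr_right (finSuccEquiv n), card_boundedFiberMaps_option,
      pow_succ', factorial_mul_coeff_mul]
    push_cast
    simp only [ih, Fintype.card_subtype_compl, Fintype.card_coe]
    rw [sum_filter, ← powerset_univ, sum_powerset_apply_card (fun b => if b ≤ m then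
      ((Fintype.card α - b)! : ℚ) * (truncExp m ^ n).coeff (Fintype.card α - b) else 0), card_univ]
    refine sum_congr rfl fun b _ => ?_
    rw [factorial_mul_coeff_truncExp, nsmul_eq_mul]
    split_ifs <;> ring

theorem card_boundedFiberMaps (m : ℕ) (α β : Type*) [Fintype α] [DecidableEq α] [Fintype β]
    [DecidableEq β] : (#(boundedFiberMaps α β m) : ℚ) =
      (Fintype.card α)! * (truncExp m ^ Fintype.card β).coeff (Fintype.card α) := by
  rw [card_boundedFiberMaps_congr_right (Fintype.equivFin β), card_boundedFiberMaps_fin]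

theorem balls_in_boxes_count_eq_factorial_mul_coeff_general (r n m : ℕ) :
    (((Finset.univ : Finset (Fin r → Fin n)).filter
        (fun f => ∀ j : Fin n,
          ((Finset.univ : Finset (Fin r)).filter (fun k => f k = j)).card ≤ m)).card : ℚ) =
      (r.factorial : ℚ) *
        (((∑ i ∈ Finset.range (m + 1),
            Polynomial.C ((i.factorial : ℚ)⁻¹) * Polynomial.X ^ i) ^ n).coeff r) := by
  have h := card_boundedFiberMaps m (Fin r) (Fin n)
  simp only [Fintype.card_fin] at h
  unfold boundedFiberMaps truncExp at h
  -- `convert` reconciles the statement's instance `Nat.decidableForallFin` with the generic one.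
  convert h

/-- The number of functions `f : Fin r → Fin n` all of whose
fibers have cardinality at most `m` equals `r!` times the coefficient of `x^r`
in `(∑_{i=0}^{m} x^i / i!)^n`, as rational numbers. -/
theorem balls_in_boxes_count_eq_factorial_mul_coeff (r n m : ℕ) (hn : 1 ≤ n) :
    (((Finset.univ : Finset (Fin r → Fin n)).filter
        (fun f => ∀ j : Fin n,
          ((Finset.univ : Finset (Fin r)).filter (fun k => f k = j)).card ≤ m)).card : ℚ) =
      (r.factorial : ℚ) *
        (((∑ i ∈ Finset.range (m + 1),
            Polynomial.C ((i.factorial : ℚ)⁻¹) * Polynomial.X ^ i) ^ n).coeff r) :=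
  balls_in_boxes_count_eq_factorial_mul_coeff_general r n m
end

section
/- Let K be a field of characteristic zero, let p = ∑_{i=0}^{m} p_i x^i be a polynomial over K of degree at most m, let n be a natural number, and write q_r for the coefficient of x^r in p^n. Then for every r ≥ 1: r · p₀ · q_r = ∑_{i=1}^{min(m,r)} ((n+1)·i − r) · p_i · q_{r−i}. -/
/-!
Differentiating `pⁿ` gives `p · (pⁿ)' = n · p' · pⁿ`. Multiplying by `X` (so that `X · f'` has
coefficients `r · f_r`, with no index shift) and comparing coefficients of `x^r` gives
`∑_{i+j=r} (n·i − j) · p_i · q_j = 0`, i.e. `∑_{i=0}^{r} ((n+1)·i − r) · p_i · q_{r−i} = 0`.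
The `i = 0` term is `−r · p₀ · q_r`, and the terms with `i > m` vanish.
-/

open Polynomial Finset

namespace Polynomial

variable {R : Type*} [CommRing R]

theorem coeff_X_mul_derivative (p : R[X]) (r : ℕ) :
    (X * derivative p).coeff r = r * p.coeff r := by
  cases r with
  | zero => simp
  | succ r => rw [coeff_X_mul, coeff_derivative, mul_comm]; push_cast; rfl

theorem mul_derivative_pow (p : R[X]) (n : ℕ) :
    p * derivative (p ^ n) = n * derivative p * p ^ n := by
  cases n with
  | zero => simp
  | succ n => rw [derivative_pow, Nat.add_sub_cancel, pow_succ, C_eq_natCast]; ring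

theorem miller_sum_antidiagonal_eq_zero (p : R[X]) (n r : ℕ) :
    ∑ x ∈ antidiagonal r,
      (((n : R) + 1) * x.1 - r) * p.coeff x.1 * (p ^ n).coeff x.2 = 0 := by
  have h : (n : R[X]) * (X * derivative p * p ^ n) = p * (X * derivative (p ^ n)) := by
    rw [mul_left_comm p X, mul_derivative_pow]; ring
  replace h := Polynomial.ext_iff.mp h r
  rw [coeff_natCast_mul, coeff_mul, coeff_mul] at h
  simp only [coeff_X_mul_derivative, mul_sum] at h
  rw [← sub_eq_zero, ← sum_sub_distrib] at h
  rw [← h]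
  refine sum_congr rfl fun x hx => ?_
  rw [← mem_antidiagonal.mp hx]
  push_cast
  ring

end Polynomial

theorem miller_recurrence_general {K : Type*} [Field K]
    (p : Polynomial K) (m : ℕ) (hp : p.degree ≤ (m : ℕ)) (n : ℕ)
    (r : ℕ) :
    (r : K) * p.coeff 0 * (p ^ n).coeff r =
      ∑ i ∈ Finset.Icc 1 (min m r),
        (((n : K) + 1) * (i : K) - (r : K)) * p.coeff i * (p ^ n).coeff (r - i) := by
  have h := miller_sum_antidiagonal_eq_zero p n r
  rw [Nat.sum_antidiagonal_eq_sum_range_succ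
      (fun i j => (((n : K) + 1) * i - r) * p.coeff i * (p ^ n).coeff j),
    range_eq_Ico, sum_eq_sum_Ico_succ_bot r.succ_pos, zero_add, Nat.succ_eq_add_one,
    Ico_add_one_right_eq_Icc, Nat.cast_zero, Nat.sub_zero] at h
  have high_coeff_zero : ∀ i ∈ Icc 1 r, i ∉ Icc 1 (min m r) →
      (((n : K) + 1) * (i : K) - (r : K)) * p.coeff i * (p ^ n).coeff (r - i) = 0 := by
    intro i hi hni
    rw [coeff_eq_zero_of_degree_lt (hp.trans_lt (by simp_all)), mul_zero, zero_mul]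
  rw [sum_subset (Icc_subset_Icc_right (min_le_right m r)) high_coeff_zero]
  linear_combination -h

/-- The J.C.P. Miller recurrence: if `p` is a polynomial of
degree at most `m` over a field `K` of characteristic zero, `p_i = p.coeff i`,
and `q_r` is the coefficient of `x^r` in `p^n`, then for every `r ≥ 1`,
`r · p₀ · q_r = ∑_{i=1}^{min(m,r)} ((n+1)·i − r) · p_i · q_{r−i}`. -/
theorem miller_recurrence {K : Type*} [Field K] [CharZero K]
    (p : Polynomial K) (m : ℕ) (hp : p.degree ≤ (m : ℕ)) (n : ℕ)
    (r : ℕ) (hr : 1 ≤ r) :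
    (r : K) * p.coeff 0 * (p ^ n).coeff r =
      ∑ i ∈ Finset.Icc 1 (min m r),
        (((n : K) + 1) * (i : K) - (r : K)) * p.coeff i * (p ^ n).coeff (r - i) :=
  miller_recurrence_general p m hp n r
end
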